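/- arXiv:1906.07073 — 2 statements merged into one kernel-verified Lean document; each statement's English description precedes it below -/
import Mathlib

section
/- Let σ(x) = 1/(1+e^{-x}) be the logistic function. Define F : ℝ² → ℝ² by F(θ₁,θ₂) = (γ·σ(θ₂)·σ'(θ₁), σ(θ₁)·σ'(θ₂)) for a fixed real γ. If γ ≠ 1, then for every (θ₁,θ₂) ∈ ℝ², ∂F₁/∂θ₂ ≠ ∂F₂/∂θ₁ at (θ₁,θ₂). -/
noncomputable def logistic (x : ℝ) : ℝ := 1 / (1 + Real.exp (-x))

noncomputable def logisticDeriv (x : ℝ) : ℝ := logistic x * (1 - logistic x)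

lemma one_add_exp_pos (x : ℝ) : 0 < 1 + Real.exp (-x) := by positivity

lemma logistic_hasDerivAt (x : ℝ) : HasDerivAt logistic (logisticDeriv x) x := by
  have h1 : HasDerivAt (fun y : ℝ => 1 + Real.exp (-y)) (-Real.exp (-x)) x := by
    simpa using (((Real.hasDerivAt_exp (-x)).comp x ((hasDerivAt_id x).neg)).const_add 1)
  have hne : (1 + Real.exp (-x)) ≠ 0 := (one_add_exp_pos x).ne'
  have := ((hasDerivAt_const x (1:ℝ)).div h1 hne)
  refine HasDerivAt.congr_deriv (f := logistic) this ?_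
  unfold logisticDeriv logistic
  field_simp
  ring

lemma logistic_pos (x : ℝ) : 0 < logistic x := by
  unfold logistic; positivity

lemma logistic_lt_one (x : ℝ) : logistic x < 1 := by
  unfold logistic
  rw [div_lt_one (one_add_exp_pos x)]
  have := Real.exp_pos (-x); linarith

lemma logisticDeriv_pos (x : ℝ) : 0 < logisticDeriv x := by
  unfold logisticDeriv
  have := logistic_pos x; have := logistic_lt_one x
  nlinarith

/-- `F(θ₁,θ₂) = (γ·σ(θ₂)·σ'(θ₁), σ(θ₁)·σ'(θ₂))`.  If `γ ≠ 1` then the cross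
partial derivatives `∂F₁/∂θ₂` and `∂F₂/∂θ₁` disagree everywhere. -/
theorem cross_partials_ne (γ : ℝ) (hγ : γ ≠ 1) (θ₁ θ₂ : ℝ) :
    deriv (fun y => γ * logistic y * logisticDeriv θ₁) θ₂ ≠
    deriv (fun x => logistic x * logisticDeriv θ₂) θ₁ := by
  have h1 : deriv (fun y => γ * logistic y * logisticDeriv θ₁) θ₂
      = γ * logisticDeriv θ₂ * logisticDeriv θ₁ := by
    have : HasDerivAt (fun y => γ * logistic y * logisticDeriv θ₁)
        (γ * logisticDeriv θ₂ * logisticDeriv θ₁) θ₂ := by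
      simpa [mul_assoc, mul_comm, mul_left_comm] using
        (((logistic_hasDerivAt θ₂).const_mul γ).mul_const (logisticDeriv θ₁))
    exact this.deriv
  have h2 : deriv (fun x => logistic x * logisticDeriv θ₂) θ₁
      = logisticDeriv θ₁ * logisticDeriv θ₂ := by
    have := (logistic_hasDerivAt θ₁).mul_const (logisticDeriv θ₂)
    simpa using this.deriv
  rw [h1, h2]
  have p1 := logisticDeriv_pos θ₁
  have p2 := logisticDeriv_pos θ₂
  intro h
  apply hγ
  have : (γ - 1) * (logisticDeriv θ₂ * logisticDeriv θ₁) = 0 := by ring_nf; nlinarith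
  rcases mul_eq_zero.1 this with h' | h'
  · linarith
  · nlinarith
end

section
/- With σ the logistic function and γ ∈ [0,1), the functions d(θ) = ((1), (1-γ)σ(θ₁)) and V(θ) = (γσ(θ₁)σ(θ₂), σ(θ₂)) on ℝ² satisfy: the 2×2 matrix M(θ) with entries M_{ij} = ∑_{k=1}^{2} (∂d_k/∂θᵢ)(∂V_k/∂θⱼ) has M₁₂ = (1-γ)·σ'(θ₁)·σ'(θ₂) and M₂₁ = 0, so M is asymmetric at every θ when γ < 1. -/
lemma logistic_eq_sigmoid : logistic = Real.sigmoid :=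
  funext fun _ => one_div _

lemma logisticDeriv_eq (x : ℝ) : logisticDeriv x = Real.sigmoid x * (1 - Real.sigmoid x) := by
  rw [logisticDeriv, logistic_eq_sigmoid]

lemma deriv_logistic : deriv logistic = logisticDeriv := by
  rw [logistic_eq_sigmoid, Real.deriv_sigmoid]
  exact funext fun x => (logisticDeriv_eq x).symm

theorem asymmetric_term_nonzero_general (γ : ℝ) (hγ1 : γ < 1) (θ₁ θ₂ : ℝ) :
    (deriv (fun _ => (1 : ℝ)) θ₁) * (deriv (fun y => γ * logistic θ₁ * logistic y) θ₂)
      + (deriv (fun x => (1 - γ) * logistic x) θ₁) * (deriv (fun y => logistic y) θ₂)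
      = (1 - γ) * logisticDeriv θ₁ * logisticDeriv θ₂ ∧
    (deriv (fun _ => (1 : ℝ)) θ₂) * (deriv (fun x => γ * logistic x * logistic θ₂) θ₁)
      + (deriv (fun _ => (1 - γ) * logistic θ₁) θ₂) * (deriv (fun _ => logistic θ₂) θ₁)
      = 0 ∧
    (1 - γ) * logisticDeriv θ₁ * logisticDeriv θ₂ ≠ 0 := by
  refine ⟨?_, by simp only [deriv_const, zero_mul, add_zero], ?_⟩
  · rw [deriv_const, zero_mul, zero_add, deriv_const_mul_field', deriv_logistic]
  · exact (mul_pos (mul_pos (sub_pos.2 hγ1) (logisticDeriv_pos θ₁)) (logisticDeriv_pos θ₂)).ne'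

/-- For `d(θ) = (1, (1-γ)σ(θ₁))` and `V(θ) = (γσ(θ₁)σ(θ₂), σ(θ₂))`, the matrix
`M_{ij} = ∑_k (∂d_k/∂θᵢ)(∂V_k/∂θⱼ)` has `M₁₂ = (1-γ)σ'(θ₁)σ'(θ₂)`, `M₂₁ = 0`,
hence `M` is asymmetric (at every `θ`) when `γ < 1`. -/
theorem asymmetric_term_nonzero (γ : ℝ) (hγ0 : 0 ≤ γ) (hγ1 : γ < 1) (θ₁ θ₂ : ℝ) :
    (deriv (fun _ => (1 : ℝ)) θ₁) * (deriv (fun y => γ * logistic θ₁ * logistic y) θ₂)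
      + (deriv (fun x => (1 - γ) * logistic x) θ₁) * (deriv (fun y => logistic y) θ₂)
      = (1 - γ) * logisticDeriv θ₁ * logisticDeriv θ₂ ∧
    (deriv (fun _ => (1 : ℝ)) θ₂) * (deriv (fun x => γ * logistic x * logistic θ₂) θ₁)
      + (deriv (fun _ => (1 - γ) * logistic θ₁) θ₂) * (deriv (fun _ => logistic θ₂) θ₁)
      = 0 ∧
    (1 - γ) * logisticDeriv θ₁ * logisticDeriv θ₂ ≠ 0 :=
  asymmetric_term_nonzero_general γ hγ1 θ₁ θ₂
end
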